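/- Assume η > 0, α(0) = 0, and set α_max := max_{l ∈ 𝔏} α(l) (so α_max ≥ 0). Let λ₁, λ₂, λ₃ > 0 satisfy λ₂ − λ₃·η ≥ λ₁ and λ₁ ≥ λ₃·(η + α_max). Let β, γ ∈ M(coord). If γ' ∈ M(coord) with [γ'] = 1 and ⟦γ'⟧ ≥ 1, and n' ∈ ℕ^d with |n'| < η + |γ'| satisfy (z^{γ'}D^{(n')})_β^γ ≠ 0, then |β|_≺ > |γ|_≺; likewise, if (∂_i)_β^γ ≠ 0 for some i ∈ {1,…,d}, then |β|_≺ > |γ|_≺. -/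

import Mathlib

open scoped Classical

noncomputable section

/-- The set of `d`-tuples of natural numbers, `ℕ^d`. -/
abbrev Nd (d : ℕ) : Type := Fin d → ℕ

/-- Multi-indices over `ℕ^d`: finitely supported functions `ℕ^d → ℕ`. -/
abbrev MNd (d : ℕ) : Type := Nd d →₀ ℕ

/-- The coordinate set `coord = (𝔏 × M(ℕ^d)) ⊔ ℕ^d`, where `𝔏 = 𝔏⁻ ∪ {0}` is
modelled as `Option Lm` (with `none` playing the role of the element `0`). -/
abbrev Coord (Lm : Type) (d : ℕ) : Type := (Option Lm × MNd d) ⊕ Nd d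

/-- Multi-indices over `coord`. -/
abbrev MCoord (Lm : Type) (d : ℕ) : Type := Coord Lm d →₀ ℕ

variable {Lm : Type} {d : ℕ}

/-- Length `ℓ(m)` of a multi-index. -/
def mlen {I : Type} (m : I →₀ ℕ) : ℕ := m.sum fun _ v => v

/-- The `i`-th unit vector of `ℕ^d`. -/
def unitNd (i : Fin d) : Nd d := Pi.single i 1

/-- The coefficient `(z^{γ'} D^{(n')})_β^γ`. -/
def coefZD (γ' : MCoord Lm d) (n' : Nd d) (β γ : MCoord Lm d) : ℝ :=
  (γ.sum fun x v =>
    match x with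
    | Sum.inl (l, k) =>
        (v : ℝ) * ((k n' : ℝ) + 1) *
          (if β + Finsupp.single (Sum.inl (l, k)) 1 =
              γ + Finsupp.single (Sum.inl (l, k + Finsupp.single n' 1)) 1 + γ'
           then 1 else 0)
    | Sum.inr _ => 0) +
  ((γ (Sum.inr n') : ℝ) *
    (if β + Finsupp.single (Sum.inr n') 1 = γ + γ' then 1 else 0))

/-- The coefficient `(D^{(n')})_β^γ`. -/
def coefD (n' : Nd d) (β γ : MCoord Lm d) : ℝ := coefZD 0 n' β γ

/-- The coefficient `(∂_i)_β^γ`. -/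
def coefPartial (i : Fin d) (β γ : MCoord Lm d) : ℝ :=
  ∑ᶠ n : Nd d,
    ((n i : ℝ) + 1) * coefZD (Finsupp.single (Sum.inr (n + unitNd i)) 1) n β γ

/-- `[β]`. -/
def brkt (β : MCoord Lm d) : ℤ :=
  β.sum fun x v =>
    match x with
    | Sum.inl (_, k) => (1 - (mlen k : ℤ)) * (v : ℤ)
    | Sum.inr _ => (v : ℤ)

/-- Noise homogeneity `⟦β⟧`. -/
def nh (β : MCoord Lm d) : ℕ :=
  β.sum fun x v =>
    match x with
    | Sum.inl (some _, _) => v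
    | Sum.inl (none, _) => 0
    | Sum.inr _ => 0

/-- Scaled degree `|n|` of `n ∈ ℕ^d`. -/
def snorm (s : Fin d → ℝ) (n : Nd d) : ℝ := ∑ i, s i * (n i : ℝ)

/-- A subcritical pair `(l,k)`. -/
def Subcritical {L : Type} (s : Fin d → ℝ) (η : ℝ) (reg : L → ℝ) (ν : ℝ)
    (l : L) (k : MNd d) : Prop :=
  ν < η + reg l ∧
  ∀ k' : MNd d, 0 < k' → k' ≤ k →
    ν < η + (k'.sum fun n v => (ν - snorm s n) * (v : ℝ)) ∧
    ν < η + reg l + (k'.sum fun n v => (ν - snorm s n) * (v : ℝ))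

/-- A subcritical multi-index. -/
def SubcriticalM (s : Fin d → ℝ) (η : ℝ) (reg : Option Lm → ℝ) (ν : ℝ)
    (β : MCoord Lm d) : Prop :=
  ∀ (l : Option Lm) (k : MNd d), β (Sum.inl (l, k)) ≠ 0 → Subcritical s η reg ν l k

/-- Homogeneity `|β|`. -/
def homg (s : Fin d → ℝ) (η : ℝ) (α : Option Lm → ℝ) (β : MCoord Lm d) : ℝ :=
  β.sum fun x v =>
    match x with
    | Sum.inl (l, k) =>
        (α l + k.sum fun n v' => (η - snorm s n) * (v' : ℝ)) * (v : ℝ)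
    | Sum.inr n => (snorm s n - η) * (v : ℝ)

/-- The set `N_min`. -/
def Nmin (s : Fin d → ℝ) (η : ℝ) (reg : Option Lm → ℝ) (ν : ℝ) :
    Set (MCoord Lm d) :=
  {β | brkt β = 1 ∧ SubcriticalM s η reg ν β ∧
       ∀ n : Nd d, snorm s n < ν → β (Sum.inr n) = 0}

/-- The set `N`. -/
def NSet (s : Fin d → ℝ) (η : ℝ) (reg : Option Lm → ℝ) (ν : ℝ) :
    Set (MCoord Lm d) :=
  {β | β ∈ Nmin s η reg ν ∧ 0 < nh β}

/-- The purely polynomial set `P = {e_n}`. -/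
def PolySet : Set (MCoord Lm d) :=
  {β | ∃ n : Nd d, β = Finsupp.single (Sum.inr n) 1}

/-- `populated = P ∪ N`. -/
def Populated (s : Fin d → ℝ) (η : ℝ) (reg : Option Lm → ℝ) (ν : ℝ) :
    Set (MCoord Lm d) :=
  PolySet ∪ NSet s η reg ν

/-- The subcritical coefficient `(z^{γ'} D^{(n')})^{sc}_β^γ`. -/
def coefZDsc (s : Fin d → ℝ) (η : ℝ) (reg : Option Lm → ℝ) (ν : ℝ)
    (γ' : MCoord Lm d) (n' : Nd d) (β γ : MCoord Lm d) : ℝ :=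
  (γ.sum fun x v =>
    match x with
    | Sum.inl (l, k) =>
        if Subcritical s η reg ν l (k + Finsupp.single n' 1) then
          (v : ℝ) * ((k n' : ℝ) + 1) *
            (if β + Finsupp.single (Sum.inl (l, k)) 1 =
                γ + Finsupp.single (Sum.inl (l, k + Finsupp.single n' 1)) 1 + γ'
             then 1 else 0)
        else 0
    | Sum.inr _ => 0) +
  ((γ (Sum.inr n') : ℝ) *
    (if β + Finsupp.single (Sum.inr n') 1 = γ + γ' then 1 else 0))

/-- The subcritical coefficient `(∂_i)^{sc}_β^γ`. -/
def coefPartialSc (s : Fin d → ℝ) (η : ℝ) (reg : Option Lm → ℝ) (ν : ℝ)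
    (i : Fin d) (β γ : MCoord Lm d) : ℝ :=
  ∑ᶠ n : Nd d,
    ((n i : ℝ) + 1) *
      coefZDsc s η reg ν (Finsupp.single (Sum.inr (n + unitNd i)) 1) n β γ

/-- `⌊β⌋ := Σ_n |n|·β(n)`. -/
def polydeg (s : Fin d → ℝ) (β : MCoord Lm d) : ℝ :=
  β.sum fun x v =>
    match x with
    | Sum.inl _ => 0
    | Sum.inr n => snorm s n * (v : ℝ)

/-- `Σ_n (|n| − ν)·β(n)`. -/
def polyexcess (s : Fin d → ℝ) (ν : ℝ) (β : MCoord Lm d) : ℝ :=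
  β.sum fun x v =>
    match x with
    | Sum.inl _ => 0
    | Sum.inr n => (snorm s n - ν) * (v : ℝ)

/-- `|β|_≺ := λ₁·ℓ(β) + λ₂·⟦β⟧ + λ₃·⌊β⌋`. -/
def ordPrec (s : Fin d → ℝ) (lam1 lam2 lam3 : ℝ) (β : MCoord Lm d) : ℝ :=
  lam1 * (mlen β : ℝ) + lam2 * (nh β : ℝ) + lam3 * polydeg s β

/-! A nonzero coefficient comes from an identity `β + e_x = γ + e_y + γ'` of multi-indices, and
`|·|_≺` is additive with `|e_{(l,k)}|_≺` independent of `k`. Hence `|β|_≺ - |γ|_≺` is `|γ'|_≺`,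
or `|γ'|_≺ - λ₁ - λ₃|n'|` when the derivative falls on a polynomial coordinate `e_{n'}`; for `∂_i`
the latter is `λ₃ s_i > 0`. For general `γ'`, the difference `|γ'|_≺ - λ₂⟦γ'⟧ - λ₃η[γ'] - λ₃|γ'|`
is a sum of coordinatewise weights, each nonnegative because `λ₃(η + α(l)) ≤ λ₁`. With `[γ'] = 1`,
`⟦γ'⟧ ≥ 1` and `λ₁ ≤ λ₂` this gives `|γ'|_≺ ≥ λ₁ + λ₃(η + |γ'|) > λ₁ + λ₃|n'|`. -/

section WeightedSum

variable {I : Type}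

def weightedSum (c : I → ℝ) (m : I →₀ ℕ) : ℝ := m.sum fun x v => c x * v

lemma weightedSum_add (c : I → ℝ) (m m' : I →₀ ℕ) :
    weightedSum c (m + m') = weightedSum c m + weightedSum c m' :=
  Finsupp.sum_add_index' (fun _ => by simp) (fun _ _ _ => by push_cast; ring)

lemma weightedSum_single (c : I → ℝ) (x : I) : weightedSum c (Finsupp.single x 1) = c x := by
  simp [weightedSum]

lemma weightedSum_nonneg {c : I → ℝ} (hc : ∀ x, 0 ≤ c x) (m : I →₀ ℕ) :
    0 ≤ weightedSum c m :=
  Finset.sum_nonneg fun x _ => mul_nonneg (hc x) (Nat.cast_nonneg _)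

lemma weightedSum_const (a : ℝ) (m : I →₀ ℕ) : weightedSum (fun _ => a) m = a * mlen m := by
  simp [weightedSum, mlen, Finsupp.sum, Finset.mul_sum]

lemma weightedSum_sub (c c' : I → ℝ) (m : I →₀ ℕ) :
    weightedSum (c - c') m = weightedSum c m - weightedSum c' m := by
  simp [weightedSum, sub_mul, Finsupp.sum_sub]

end WeightedSum

lemma snorm_nonneg {s : Fin d → ℝ} (hs : ∀ i, 0 ≤ s i) (n : Nd d) : 0 ≤ snorm s n :=
  Finset.sum_nonneg fun i _ => mul_nonneg (hs i) (Nat.cast_nonneg _)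

lemma snorm_add (s : Fin d → ℝ) (a b : Nd d) : snorm s (a + b) = snorm s a + snorm s b := by
  simp [snorm, mul_add, Finset.sum_add_distrib]

lemma snorm_unitNd (s : Fin d → ℝ) (i : Fin d) : snorm s (unitNd i) = s i := by
  simp [snorm, unitNd, Pi.single_apply]

lemma polydeg_nonneg {s : Fin d → ℝ} (hs : ∀ i, 0 ≤ s i) (β : MCoord Lm d) :
    0 ≤ polydeg s β := by
  refine Finset.sum_nonneg fun x _ => ?_
  rcases x with _ | n
  · exact le_rfl
  · exact mul_nonneg (snorm_nonneg hs n) (Nat.cast_nonneg _)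

lemma exists_or_eq_of_coefZD_ne_zero {γ' : MCoord Lm d} {n' : Nd d} {β γ : MCoord Lm d}
    (h : coefZD γ' n' β γ ≠ 0) :
    (∃ l k, β + Finsupp.single (.inl (l, k)) 1 =
        γ + Finsupp.single (.inl (l, k + Finsupp.single n' 1)) 1 + γ') ∨
      β + Finsupp.single (.inr n') 1 = γ + γ' := by
  by_contra! hc
  obtain ⟨hinl, hinr⟩ := hc
  refine h ?_
  rw [coefZD, if_neg hinr, mul_zero, add_zero]
  refine Finset.sum_eq_zero fun x _ => ?_
  rcases x with ⟨l, k⟩ | n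
  · simp [if_neg (hinl l k)]
  · rfl

lemma exists_coefZD_ne_zero_of_coefPartial_ne_zero {i : Fin d} {β γ : MCoord Lm d}
    (h : coefPartial i β γ ≠ 0) :
    ∃ n, coefZD (Finsupp.single (.inr (n + unitNd i)) 1) n β γ ≠ 0 := by
  by_contra! hc
  exact h (finsum_eq_zero_of_forall_eq_zero fun n => by rw [hc n, mul_zero])

section Order

variable (s : Fin d → ℝ) (l1 l2 l3 : ℝ)

def precWeight : Coord Lm d → ℝ
  | .inl (some _, _) => l1 + l2
  | .inl (none, _) => l1
  | .inr n => l1 + l3 * snorm s n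

lemma ordPrec_eq_weightedSum (β : MCoord Lm d) :
    ordPrec s l1 l2 l3 β = weightedSum (precWeight s l1 l2 l3) β := by
  simp only [ordPrec, mlen, nh, polydeg, weightedSum, Finsupp.sum, Nat.cast_sum, Finset.mul_sum,
    ← Finset.sum_add_distrib]
  refine Finset.sum_congr rfl fun x _ => ?_
  rcases x with ⟨_ | l, k⟩ | n <;> simp only [precWeight] <;> push_cast <;> ring

lemma ordPrec_add (β γ : MCoord Lm d) :
    ordPrec s l1 l2 l3 (β + γ) = ordPrec s l1 l2 l3 β + ordPrec s l1 l2 l3 γ := by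
  simp only [ordPrec_eq_weightedSum, weightedSum_add]

lemma ordPrec_single_inl (l : Option Lm) (k k' : MNd d) :
    ordPrec s l1 l2 l3 (Finsupp.single (.inl (l, k)) 1) =
      ordPrec s l1 l2 l3 (Finsupp.single (.inl (l, k')) 1) := by
  simp only [ordPrec_eq_weightedSum, weightedSum_single]
  cases l <;> rfl

lemma ordPrec_single_inr (n : Nd d) :
    ordPrec s l1 l2 l3 (Finsupp.single (.inr n) 1 : MCoord Lm d) = l1 + l3 * snorm s n := by
  simp only [ordPrec_eq_weightedSum, weightedSum_single]
  rfl

variable {s l1 l2 l3}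

lemma ordPrec_pos_of_nh_pos (hs : ∀ i, 0 ≤ s i) (h1 : 0 ≤ l1) (h2 : 0 < l2) (h3 : 0 ≤ l3)
    {β : MCoord Lm d} (hβ : 0 < nh β) :
    0 < ordPrec s l1 l2 l3 β := by
  have hnoise : 0 < l2 * (nh β : ℝ) := mul_pos h2 (by exact_mod_cast hβ)
  have hlen := mul_nonneg h1 (Nat.cast_nonneg (α := ℝ) (mlen β))
  have hdeg := mul_nonneg h3 (polydeg_nonneg hs β)
  unfold ordPrec
  linarith

lemma ordPrec_lt_of_coefZD_ne_zero {γ' : MCoord Lm d} {n' : Nd d} {β γ : MCoord Lm d}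
    (h : coefZD γ' n' β γ ≠ 0) (hpos : 0 < ordPrec s l1 l2 l3 γ')
    (hn' : l1 + l3 * snorm s n' < ordPrec s l1 l2 l3 γ') :
    ordPrec s l1 l2 l3 γ < ordPrec s l1 l2 l3 β := by
  rcases exists_or_eq_of_coefZD_ne_zero h with ⟨l, k, heq⟩ | heq
  · have := congrArg (ordPrec s l1 l2 l3) heq
    simp only [ordPrec_add, ordPrec_single_inl s l1 l2 l3 l (k + Finsupp.single n' 1) k] at this
    linarith
  · have := congrArg (ordPrec s l1 l2 l3) heq
    simp only [ordPrec_add, ordPrec_single_inr] at this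
    linarith

lemma ordPrec_lt_of_coefPartial_ne_zero (hs : ∀ i, 0 < s i) (h1 : 0 ≤ l1) (h3 : 0 < l3)
    {i : Fin d} {β γ : MCoord Lm d} (h : coefPartial i β γ ≠ 0) :
    ordPrec s l1 l2 l3 γ < ordPrec s l1 l2 l3 β := by
  obtain ⟨n, hn⟩ := exists_coefZD_ne_zero_of_coefPartial_ne_zero h
  have hn0 := snorm_nonneg (fun j => (hs j).le) n
  have hsi := mul_pos h3 (hs i)
  refine ordPrec_lt_of_coefZD_ne_zero hn ?_ ?_ <;>
    rw [ordPrec_single_inr, snorm_add, snorm_unitNd] <;> nlinarith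

end Order

section Homogeneity

variable (s : Fin d → ℝ) (η : ℝ) (α : Option Lm → ℝ) (l1 l2 l3 : ℝ)

def slackWeight : Coord Lm d → ℝ
  | .inl (l, k) => l1 - l3 * (η + α l) + l3 * weightedSum (snorm s) k
  | .inr _ => l1

lemma ordPrec_sub_eq_weightedSum_slackWeight (β : MCoord Lm d) :
    ordPrec s l1 l2 l3 β - l2 * nh β - l3 * η * brkt β - l3 * homg s η α β =
      weightedSum (slackWeight s η α l1 l3) β := by
  have hk (k : MNd d) : ∑ n ∈ k.support, (η - snorm s n) * (k n : ℝ) =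
      η * mlen k - weightedSum (snorm s) k := by
    rw [← weightedSum_const, ← weightedSum_sub]; rfl
  simp only [ordPrec_eq_weightedSum, nh, brkt, homg, weightedSum, Finsupp.sum, Nat.cast_sum,
    Int.cast_sum, Finset.mul_sum, ← Finset.sum_sub_distrib]
  refine Finset.sum_congr rfl fun x _ => ?_
  rcases x with ⟨_ | l, k⟩ | n <;> simp only [precWeight, slackWeight, hk] <;> push_cast <;> ring

variable {s η α l1 l2 l3}

lemma le_ordPrec_of_brkt_eq_one (hs : ∀ i, 0 ≤ s i) (h1 : 0 ≤ l1) (h3 : 0 ≤ l3)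
    (hA : l1 ≤ l2) (hB : ∀ l, l3 * (η + α l) ≤ l1) {γ' : MCoord Lm d} (hbr : brkt γ' = 1)
    (hnh : 1 ≤ nh γ') :
    l1 + l3 * η + l3 * homg s η α γ' ≤ ordPrec s l1 l2 l3 γ' := by
  have hslack : 0 ≤ weightedSum (slackWeight s η α l1 l3) γ' := by
    refine weightedSum_nonneg (fun x => ?_) γ'
    rcases x with ⟨l, k⟩ | n
    · have := mul_nonneg h3 (weightedSum_nonneg (snorm_nonneg hs) k)
      simp only [slackWeight]
      linarith [hB l]
    · exact h1
  rw [← ordPrec_sub_eq_weightedSum_slackWeight s η α l1 l2 l3, hbr] at hslack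
  have hnh' : (1 : ℝ) ≤ nh γ' := by exact_mod_cast hnh
  push_cast at hslack
  nlinarith

end Homogeneity

theorem stmt17_general {Lm : Type} [Fintype Lm] {d : ℕ}
    (s : Fin d → ℝ) (hs : ∀ i, 1 ≤ s i) (η : ℝ) (hη : 0 < η)
    (α : Option Lm → ℝ)
    (lam1 lam2 lam3 : ℝ) (h1 : 0 < lam1) (h2 : 0 < lam2) (h3 : 0 < lam3)
    (hA : lam1 ≤ lam2 - lam3 * η)
    (hB : lam3 * (η + Finset.univ.sup' Finset.univ_nonempty α) ≤ lam1)
    (β γ : MCoord Lm d) :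
    (∀ (γ' : MCoord Lm d) (n' : Nd d), brkt γ' = 1 → 1 ≤ nh γ' →
      snorm s n' < η + homg s η α γ' → coefZD γ' n' β γ ≠ 0 →
      ordPrec s lam1 lam2 lam3 γ < ordPrec s lam1 lam2 lam3 β) ∧
    (∀ i : Fin d, coefPartial i β γ ≠ 0 →
      ordPrec s lam1 lam2 lam3 γ < ordPrec s lam1 lam2 lam3 β) := by
  have hs_pos : ∀ i, 0 < s i := fun i => one_pos.trans_le (hs i)
  have hs_nonneg : ∀ i, 0 ≤ s i := fun i => (hs_pos i).le
  have hlam : lam1 ≤ lam2 := by nlinarith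
  have hBl : ∀ l, lam3 * (η + α l) ≤ lam1 := fun l =>
    le_trans (by gcongr; exact Finset.le_sup' α (Finset.mem_univ l)) hB
  refine ⟨fun γ' n' hbr hnh hn' hne => ?_,
    fun i => ordPrec_lt_of_coefPartial_ne_zero hs_pos h1.le h3⟩
  have hγ' := le_ordPrec_of_brkt_eq_one hs_nonneg h1.le h3.le hlam hBl hbr hnh
  have hn'' : lam3 * snorm s n' < lam3 * (η + homg s η α γ') := mul_lt_mul_of_pos_left hn' h3
  exact ordPrec_lt_of_coefZD_ne_zero hne (ordPrec_pos_of_nh_pos hs_nonneg h1.le h2 h3.le hnh)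
    (by linarith)

theorem stmt17 {Lm : Type} [Fintype Lm] {d : ℕ} (hd : 1 ≤ d)
    (s : Fin d → ℝ) (hs : ∀ i, 1 ≤ s i) (η : ℝ) (hη : 0 < η)
    (α : Option Lm → ℝ) (hα0 : α none = 0)
    (lam1 lam2 lam3 : ℝ) (h1 : 0 < lam1) (h2 : 0 < lam2) (h3 : 0 < lam3)
    (hA : lam1 ≤ lam2 - lam3 * η)
    (hB : lam3 * (η + Finset.univ.sup' Finset.univ_nonempty α) ≤ lam1)
    (β γ : MCoord Lm d) :
    (∀ (γ' : MCoord Lm d) (n' : Nd d), brkt γ' = 1 → 1 ≤ nh γ' →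
      snorm s n' < η + homg s η α γ' → coefZD γ' n' β γ ≠ 0 →
      ordPrec s lam1 lam2 lam3 γ < ordPrec s lam1 lam2 lam3 β) ∧
    (∀ i : Fin d, coefPartial i β γ ≠ 0 →
      ordPrec s lam1 lam2 lam3 γ < ordPrec s lam1 lam2 lam3 β) :=
  stmt17_general s hs η hη α lam1 lam2 lam3 h1 h2 h3 hA hB β γ
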